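/- arXiv:0904.4083 — 2 statements merged into one kernel-verified Lean document; each statement's English description precedes it below -/
import Mathlib

section
/- Let d_z, d_x ∈ [−1,1], let U, V ∈ SO(2), and let S = V·diag(d_z,d_x)·U. For a real 2×2 matrix M define K(M) := 1 − h₂((1+d_z)/2) − h₂((1+d_x)/2) + h₂((1+‖M e₁‖)/2) − h₂((1+M₁₁)/2). Then K(Q_B·S·Q_A) ≤ 1 − h₂((1+d_z)/2) − h₂((1+d_x)/2) for all Q_A, Q_B ∈ SO(2), and equality holds for Q_A = Uᵀ and Q_B = Vᵀ; hence the supremum of K(Q_B·S·Q_A) over Q_A, Q_B ∈ SO(2) equals 1 − h₂((1+d_z)/2) − h₂((1+d_x)/2). -/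
/-!
Write `S = V D U` with `D = diag(d_z, d_x)`. For compensations `Q_A, Q_B`, the first column of
`Q_B S Q_A` is `(Q_B V) D (U Q_A) e₁`; the outer orthogonal factor preserves its length and `D`
contracts, so it has length at most `1`. Since `h₂((1 + t)/2)` depends only on `|t|` and decreases
in `|t| ≤ 1`, the bound `|M₁₁| ≤ ‖M e₁‖ ≤ 1` makes the last two terms of `K(M)` sum to at most `0`.
For `Q_A = Uᵀ`, `Q_B = Vᵀ` the matrix is `D` itself, where `‖D e₁‖ = |d_z| = |D₁₁|`.
-/

/-- Binary entropy function (base-2 logarithm), with the convention `0 * log 0 = 0`. -/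
noncomputable def h2 (p : ℝ) : ℝ := -(p * Real.logb 2 p) - (1 - p) * Real.logb 2 (1 - p)

/-- `M` is a real 2×2 special orthogonal matrix. -/
def SO2 (M : Matrix (Fin 2) (Fin 2) ℝ) : Prop := M.transpose * M = 1 ∧ M.det = 1

/-- Euclidean norm of the first column of a 2×2 real matrix. -/
noncomputable def colNorm2 (M : Matrix (Fin 2) (Fin 2) ℝ) : ℝ :=
  Real.sqrt ((M 0 0) ^ 2 + (M 1 0) ^ 2)

open Matrix

lemma h2_eq_binEntropy_div_log (p : ℝ) : h2 p = Real.binEntropy p / Real.log 2 := by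
  simp only [h2, Real.binEntropy, Real.logb, Real.log_inv]
  ring

lemma h2_one_sub (p : ℝ) : h2 (1 - p) = h2 p := by
  rw [h2_eq_binEntropy_div_log, h2_eq_binEntropy_div_log, Real.binEntropy_one_sub]

lemma h2_one_add_abs_div_two (a : ℝ) : h2 ((1 + |a|) / 2) = h2 ((1 + a) / 2) := by
  rcases abs_cases a with ⟨h, _⟩ | ⟨h, _⟩
  · rw [h]
  · rw [h, show (1 + -a) / 2 = 1 - (1 + a) / 2 by ring, h2_one_sub]

lemma h2_one_add_div_two_le_of_abs_le {a b : ℝ} (hab : |a| ≤ b) (hb : b ≤ 1) :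
    h2 ((1 + b) / 2) ≤ h2 ((1 + a) / 2) := by
  rw [← h2_one_add_abs_div_two a, h2_eq_binEntropy_div_log, h2_eq_binEntropy_div_log]
  have ha := abs_nonneg a
  refine div_le_div_of_nonneg_right ?_ (Real.log_nonneg one_le_two)
  exact Real.binEntropy_strictAntiOn.antitoneOn ⟨by linarith, by linarith⟩
    ⟨by linarith, by linarith⟩ (by linarith)

lemma SO2.transpose {M : Matrix (Fin 2) (Fin 2) ℝ} (h : SO2 M) : SO2 Mᵀ :=
  ⟨by rw [transpose_transpose]; exact mul_eq_one_comm.mp h.1, by rw [det_transpose]; exact h.2⟩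

section Orthogonal

variable {n R : Type*} [Fintype n] [DecidableEq n] [CommRing R]

lemma transpose_mul_self_of_mul {A B : Matrix n n R} (hA : Aᵀ * A = 1) (hB : Bᵀ * B = 1) :
    (A * B)ᵀ * (A * B) = 1 := by
  rw [transpose_mul, Matrix.mul_assoc, ← Matrix.mul_assoc Aᵀ, hA, Matrix.one_mul, hB]

lemma mulVec_dotProduct_mulVec_self {B : Matrix n n R} (hB : Bᵀ * B = 1) (v : n → R) :
    (B *ᵥ v) ⬝ᵥ (B *ᵥ v) = v ⬝ᵥ v := by
  rw [dotProduct_mulVec, ← mulVec_transpose, mulVec_mulVec, hB, one_mulVec]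

end Orthogonal

lemma diagonal_mulVec_dotProduct_self_le {n : Type*} [Fintype n] [DecidableEq n] {d : n → ℝ}
    (hd : ∀ i, |d i| ≤ 1) (v : n → ℝ) :
    (diagonal d *ᵥ v) ⬝ᵥ (diagonal d *ᵥ v) ≤ v ⬝ᵥ v := by
  simp only [mulVec_diagonal, dotProduct]
  refine Finset.sum_le_sum fun i _ => ?_
  have hdi : d i * d i ≤ 1 := by nlinarith [abs_le.mp (hd i), abs_mul_abs_self (d i)]
  nlinarith [mul_self_nonneg (v i)]

lemma colNorm2_eq_sqrt_dotProduct (M : Matrix (Fin 2) (Fin 2) ℝ) :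
    colNorm2 M = √((M *ᵥ Pi.single 0 1) ⬝ᵥ (M *ᵥ Pi.single 0 1)) := by
  simp [colNorm2, dotProduct, Fin.sum_univ_two, sq]

lemma abs_apply_zero_zero_le_colNorm2 (M : Matrix (Fin 2) (Fin 2) ℝ) : |M 0 0| ≤ colNorm2 M :=
  Real.abs_le_sqrt (le_add_of_nonneg_right (sq_nonneg _))

lemma colNorm2_diagonal (d : Fin 2 → ℝ) : colNorm2 (diagonal d) = |d 0| := by
  simp [colNorm2, Real.sqrt_sq_eq_abs]

lemma colNorm2_mul_diagonal_mul_le_one {A B : Matrix (Fin 2) (Fin 2) ℝ} {d : Fin 2 → ℝ}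
    (hA : Aᵀ * A = 1) (hB : Bᵀ * B = 1) (hd : ∀ i, |d i| ≤ 1) :
    colNorm2 (B * diagonal d * A) ≤ 1 := by
  rw [colNorm2_eq_sqrt_dotProduct, ← mulVec_mulVec, ← mulVec_mulVec,
    mulVec_dotProduct_mulVec_self hB, Real.sqrt_le_one]
  calc _ ≤ (A *ᵥ Pi.single 0 1) ⬝ᵥ (A *ᵥ Pi.single 0 1) := diagonal_mulVec_dotProduct_self_le hd _
    _ = 1 := by rw [mulVec_dotProduct_mulVec_self hA]; simp

theorem stmt5 (dz dx : ℝ) (hdz : dz ∈ Set.Icc (-1 : ℝ) 1) (hdx : dx ∈ Set.Icc (-1 : ℝ) 1)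
    (U V : Matrix (Fin 2) (Fin 2) ℝ) (hU : SO2 U) (hV : SO2 V)
    (S : Matrix (Fin 2) (Fin 2) ℝ)
    (hS : S = V * Matrix.diagonal ![dz, dx] * U)
    (K : Matrix (Fin 2) (Fin 2) ℝ → ℝ)
    (hK : ∀ M, K M = 1 - h2 ((1 + dz) / 2) - h2 ((1 + dx) / 2)
      + h2 ((1 + colNorm2 M) / 2) - h2 ((1 + M 0 0) / 2)) :
    (∀ QA QB, SO2 QA → SO2 QB →
      K (QB * S * QA) ≤ 1 - h2 ((1 + dz) / 2) - h2 ((1 + dx) / 2)) ∧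
    K (V.transpose * S * U.transpose) = 1 - h2 ((1 + dz) / 2) - h2 ((1 + dx) / 2) ∧
    sSup {r : ℝ | ∃ QA QB, SO2 QA ∧ SO2 QB ∧ r = K (QB * S * QA)} =
      1 - h2 ((1 + dz) / 2) - h2 ((1 + dx) / 2) := by
  have hd : ∀ i, |![dz, dx] i| ≤ 1 := by
    simpa [Fin.forall_fin_two, abs_le] using ⟨hdz, hdx⟩
  have upper : ∀ QA QB, SO2 QA → SO2 QB →
      K (QB * S * QA) ≤ 1 - h2 ((1 + dz) / 2) - h2 ((1 + dx) / 2) := by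
    intro QA QB hQA hQB
    have hnorm : colNorm2 (QB * S * QA) ≤ 1 := by
      rw [hS, show QB * (V * diagonal ![dz, dx] * U) * QA
          = QB * V * diagonal ![dz, dx] * (U * QA) by simp only [Matrix.mul_assoc]]
      exact colNorm2_mul_diagonal_mul_le_one (transpose_mul_self_of_mul hU.1 hQA.1)
        (transpose_mul_self_of_mul hQB.1 hV.1) hd
    rw [hK]
    linarith [h2_one_add_div_two_le_of_abs_le (abs_apply_zero_zero_le_colNorm2 _) hnorm]
  have attained : K (Vᵀ * S * Uᵀ) = 1 - h2 ((1 + dz) / 2) - h2 ((1 + dx) / 2) := by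
    have hdiag : Vᵀ * S * Uᵀ = diagonal ![dz, dx] := by
      rw [hS, show Vᵀ * (V * diagonal ![dz, dx] * U) * Uᵀ
          = Vᵀ * V * diagonal ![dz, dx] * (U * Uᵀ) by simp only [Matrix.mul_assoc],
        hV.1, mul_eq_one_comm.mp hU.1, Matrix.one_mul, Matrix.mul_one]
    rw [hK, hdiag, colNorm2_diagonal]
    simp [h2_one_add_abs_div_two]
  have greatest : IsGreatest {r : ℝ | ∃ QA QB, SO2 QA ∧ SO2 QB ∧ r = K (QB * S * QA)}
      (1 - h2 ((1 + dz) / 2) - h2 ((1 + dx) / 2)) :=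
    ⟨⟨Uᵀ, Vᵀ, hU.transpose, hV.transpose, attained.symm⟩,
      fun _ ⟨QA, QB, hQA, hQB, hr⟩ => hr ▸ upper QA QB hQA hQB⟩
  exact ⟨upper, attained, greatest.csSup_eq⟩
end

section
/- For all real numbers u, a, b ∈ [0,1], h₂((1+√(u·a+(1−u)·b))/2) + h₂((1+√((1−u)·a+u·b))/2) ≥ h₂((1+√a)/2) + h₂((1+√b)/2). -/
open Real Set

theorem ConcaveOn.add_le_add_of_swapped_weights {𝕜 E β : Type*} [Field 𝕜] [LinearOrder 𝕜]
    [IsStrictOrderedRing 𝕜] [AddCommGroup E] [Module 𝕜 E] [AddCommGroup β] [PartialOrder β]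
    [IsOrderedAddMonoid β] [Module 𝕜 β] {s : Set E} {f : E → β} (hf : ConcaveOn 𝕜 s f)
    {a b : E} (ha : a ∈ s) (hb : b ∈ s) {u : 𝕜} (hu : u ∈ Icc (0 : 𝕜) 1) :
    f a + f b ≤ f (u • a + (1 - u) • b) + f ((1 - u) • a + u • b) := by
  have hu' : 0 ≤ 1 - u := sub_nonneg.2 hu.2
  calc f a + f b = (u • f a + (1 - u) • f b) + ((1 - u) • f a + u • f b) := by
        rw [add_add_add_comm, ← add_smul, ← add_smul]
        simp
    _ ≤ _ := add_le_add (hf.2 ha hb hu.1 hu' (by abel)) (hf.2 ha hb hu' hu.1 (by abel))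

lemma h2_eq_binEntropy_div (p : ℝ) : h2 p = binEntropy p / log 2 := by
  simp only [h2, binEntropy, logb, log_inv]
  ring

lemma hasSum_log_one_add_sqrt_sub_log_one_sub_sqrt_div_sqrt {x : ℝ} (hx : x ∈ Ioo 0 1) :
    HasSum (fun k : ℕ ↦ 2 / (2 * k + 1) * x ^ k) ((log (1 + √x) - log (1 - √x)) / √x) := by
  have hs : 0 < √x := sqrt_pos.2 hx.1
  have hs1 : |√x| < 1 := by simpa [abs_of_pos hs] using sqrt_lt_sqrt hx.1.le hx.2
  have hterm (k : ℕ) :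
      2 * (1 / (2 * k + 1)) * √x ^ (2 * k + 1) / √x = 2 / (2 * k + 1) * x ^ k := by
    rw [pow_succ, pow_mul, sq_sqrt hx.1.le]
    field_simp
  simpa only [hterm] using (hasSum_log_sub_log_of_abs_lt_one hs1).div_const (√x)

lemma monotoneOn_log_one_add_sqrt_sub_log_one_sub_sqrt_div_sqrt :
    MonotoneOn (fun x ↦ (log (1 + √x) - log (1 - √x)) / √x) (Ioo 0 1) := by
  intro x hx y hy hxy
  refine hasSum_le (fun k ↦ ?_) (hasSum_log_one_add_sqrt_sub_log_one_sub_sqrt_div_sqrt hx)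
    (hasSum_log_one_add_sqrt_sub_log_one_sub_sqrt_div_sqrt hy)
  gcongr
  exact hx.1.le

lemma hasDerivAt_binEntropy_one_add_sqrt_div_two {x : ℝ} (hx : x ∈ Ioo 0 1) :
    HasDerivAt (fun x ↦ binEntropy ((1 + √x) / 2))
      (-((log (1 + √x) - log (1 - √x)) / √x / 4)) x := by
  have hs : 0 < √x := sqrt_pos.2 hx.1
  have hs1 : √x < 1 := by simpa using sqrt_lt_sqrt hx.1.le hx.2
  have hp := ((hasDerivAt_sqrt hx.1.ne').const_add 1).div_const 2
  refine ((hasDerivAt_binEntropy (p := (1 + √x) / 2) (by positivity) (by linarith)).comp x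
    hp).congr_deriv ?_
  rw [show 1 - (1 + √x) / 2 = (1 - √x) / 2 by ring, log_div (by linarith) two_ne_zero,
    log_div (by linarith) two_ne_zero]
  field_simp
  ring

theorem concaveOn_binEntropy_one_add_sqrt_div_two :
    ConcaveOn ℝ (Icc 0 1) (fun x ↦ binEntropy ((1 + √x) / 2)) := by
  have hderiv := fun x (hx : x ∈ Ioo (0 : ℝ) 1) ↦ hasDerivAt_binEntropy_one_add_sqrt_div_two hx
  refine AntitoneOn.concaveOn_of_deriv (convex_Icc 0 1) (by fun_prop) ?_ ?_ <;>
    rw [interior_Icc]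
  · exact fun x hx ↦ (hderiv x hx).differentiableAt.differentiableWithinAt
  · intro x hx y hy hxy
    rw [(hderiv x hx).deriv, (hderiv y hy).deriv]
    have := monotoneOn_log_one_add_sqrt_sub_log_one_sub_sqrt_div_sqrt hx hy hxy
    simp only at this
    linarith

theorem stmt9 (u a b : ℝ) (hu : u ∈ Set.Icc (0 : ℝ) 1) (ha : a ∈ Set.Icc (0 : ℝ) 1)
    (hb : b ∈ Set.Icc (0 : ℝ) 1) :
    h2 ((1 + Real.sqrt a) / 2) + h2 ((1 + Real.sqrt b) / 2) ≤
      h2 ((1 + Real.sqrt (u * a + (1 - u) * b)) / 2) +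
        h2 ((1 + Real.sqrt ((1 - u) * a + u * b)) / 2) := by
  have h := concaveOn_binEntropy_one_add_sqrt_div_two.add_le_add_of_swapped_weights ha hb hu
  simp only [smul_eq_mul] at h
  simp only [h2_eq_binEntropy_div, ← add_div]
  exact div_le_div_of_nonneg_right h (log_nonneg one_le_two)
end
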